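/- arXiv:2401.13238 — 5 statements merged into one kernel-verified Lean document; each statement's English description precedes it below -/
import Mathlib

section
/- Let X2, X3, X4, X5, X7 be i.i.d. Exponential(1) random variables. Then P(X3 < X4, X3 < X5, X2 + X3 < X4 + X7, X2 + X3 < X5 + X7) = 2/9. -/
/-!
Conditionally on `X2 = a`, `X3 = b`, `X7 = t`, the event says that both `X4` and `X5` exceed
`b + (a - t)⁺`, which has probability `exp (-2 (b + (a - t)⁺))`. Integrating out `X3` gives the
factor `E[exp (-2 X3)] = 1/3`. Integrating over `X2` splits at `X2 = X7`: the part `X2 ≤ X7`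
contributes `P(X2 ≤ X7) = 1/2`, and by memorylessness the part `X2 > X7` contributes
`E[exp (-X7)] / 3 = 1/6`. Hence the probability is `(1/2 + 1/6) / 3 = 2/9`.
-/

open MeasureTheory ProbabilityTheory Real Set
open scoped ENNReal

lemma Measurable.measure_Ioi {α : Type*} [MeasurableSpace α] (ν : Measure ℝ) {f : α → ℝ}
    (hf : Measurable f) : Measurable fun x => ν (Ioi (f x)) :=
  (Antitone.measurable fun _ _ h => measure_mono (Ioi_subset_Ioi h)).comp hf

lemma MeasureTheory.Measure.prod_setOf_lt_and_lt {α : Type*} [MeasurableSpace α]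
    (ρ : Measure α) [SFinite ρ] (ν : Measure ℝ) [SFinite ν] {f : α → ℝ} (hf : Measurable f) :
    ρ.prod (ν.prod ν) {p | f p.1 < p.2.1 ∧ f p.1 < p.2.2} = ∫⁻ x, ν (Ioi (f x)) ^ 2 ∂ρ := by
  have hs : MeasurableSet {p : α × ℝ × ℝ | f p.1 < p.2.1 ∧ f p.1 < p.2.2} :=
    (measurableSet_lt (hf.comp measurable_fst) (by fun_prop)).inter
      (measurableSet_lt (hf.comp measurable_fst) (by fun_prop))
  rw [Measure.prod_apply hs]
  refine lintegral_congr fun x => ?_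
  rw [sq, ← Measure.prod_prod]
  rfl

lemma measurePreserving_prod_finFive {α : Type*} [MeasurableSpace α] (ν : Measure α)
    [SigmaFinite ν] :
    MeasurePreserving (fun p : (α × α × α) × α × α => ![p.1.2.1, p.1.2.2, p.2.1, p.2.2, p.1.1])
      ((ν.prod (ν.prod ν)).prod (ν.prod ν)) (Measure.pi fun _ : Fin 5 => ν) := by
  have hmeas : Measurable fun p : (α × α × α) × α × α =>
      ![p.1.2.1, p.1.2.2, p.2.1, p.2.2, p.1.1] := by
    refine measurable_pi_lambda _ fun i => ?_
    fin_cases i <;> dsimp <;> fun_prop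
  refine ⟨hmeas, (Measure.pi_eq fun s hs => ?_).symm⟩
  rw [Measure.map_apply hmeas (.univ_pi hs)]
  have hpre : (fun p : (α × α × α) × α × α => ![p.1.2.1, p.1.2.2, p.2.1, p.2.2, p.1.1]) ⁻¹'
      univ.pi s = (s 4 ×ˢ s 0 ×ˢ s 1) ×ˢ s 2 ×ˢ s 3 := by
    ext ⟨⟨t, a, b⟩, y, z⟩
    simp only [mem_preimage, mem_univ_pi, Fin.forall_fin_succ, mem_prod, Matrix.cons_val_zero,
      Matrix.cons_val_succ, IsEmpty.forall_iff, and_true]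
    tauto
  simp only [hpre, Measure.prod_prod, Fin.prod_univ_five]
  ring

namespace ProbabilityTheory

variable {r : ℝ}

lemma expMeasure_eq_withDensity : expMeasure r = volume.withDensity (exponentialPDF r) := rfl

lemma measurable_exponentialPDF : Measurable (exponentialPDF r) :=
  (measurable_exponentialPDFReal r).ennreal_ofReal

lemma ae_pos_expMeasure : ∀ᵐ x ∂expMeasure r, 0 < x := by
  rw [ae_iff]
  simp only [not_lt]
  change expMeasure r (Iic 0) = 0
  rw [expMeasure_eq_withDensity, withDensity_apply _ measurableSet_Iic,
    ← setLIntegral_congr Iio_ae_eq_Iic]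
  exact lintegral_exponentialPDF_of_nonpos le_rfl

lemma setLIntegral_Ioi_exp_neg_mul_expMeasure (hr : 0 < r) {c t : ℝ} (hrc : 0 < r + c)
    (ht : 0 ≤ t) :
    ∫⁻ x in Ioi t, ENNReal.ofReal (exp (-(c * x))) ∂expMeasure r
      = ENNReal.ofReal (r / (r + c) * exp (-((r + c) * t))) := by
  have hexp : ∀ x, exp (-(r * x)) * exp (-(c * x)) = exp (-(r + c) * x) := fun x => by
    rw [← exp_add]; ring_nf
  rw [expMeasure_eq_withDensity, setLIntegral_withDensity_eq_setLIntegral_mul _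
    measurable_exponentialPDF (by fun_prop) measurableSet_Ioi]
  rw [setLIntegral_congr_fun measurableSet_Ioi
    (g := fun x => ENNReal.ofReal (r * exp (-(r + c) * x))) fun x hx => by
      rw [Pi.mul_apply, exponentialPDF_of_nonneg (ht.trans hx.out.le),
        ← ENNReal.ofReal_mul (by positivity), mul_assoc, hexp]]
  rw [← ofReal_integral_eq_lintegral_ofReal
    ((integrableOn_exp_mul_Ioi (by linarith) t).const_mul r)
    (Filter.Eventually.of_forall fun x => by positivity), integral_const_mul,
    integral_exp_mul_Ioi (by linarith)]
  congr 1
  field_simp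

lemma expMeasure_Ioi (hr : 0 < r) {t : ℝ} (ht : 0 ≤ t) :
    expMeasure r (Ioi t) = ENNReal.ofReal (exp (-(r * t))) := by
  simpa [hr.ne'] using setLIntegral_Ioi_exp_neg_mul_expMeasure hr (c := 0) (by simpa) ht

lemma lintegral_exp_neg_mul_expMeasure (hr : 0 < r) {c : ℝ} (hrc : 0 < r + c) :
    ∫⁻ x, ENNReal.ofReal (exp (-(c * x))) ∂expMeasure r = ENNReal.ofReal (r / (r + c)) := by
  rw [← Measure.restrict_eq_self_of_ae_mem (s := Ioi 0) ae_pos_expMeasure,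
    setLIntegral_Ioi_exp_neg_mul_expMeasure hr hrc le_rfl]
  simp

lemma lintegral_expMeasure_Ioi_add_sq (hr : 0 < r) {c : ℝ} (hc : 0 ≤ c) :
    ∫⁻ b, expMeasure r (Ioi (b + c)) ^ 2 ∂expMeasure r
      = ENNReal.ofReal (exp (-(2 * r * c))) * ENNReal.ofReal (1 / 3) := by
  calc ∫⁻ b, expMeasure r (Ioi (b + c)) ^ 2 ∂expMeasure r
      = ∫⁻ b, ENNReal.ofReal (exp (-(2 * r * c))) * ENNReal.ofReal (exp (-(2 * r * b)))
          ∂expMeasure r := by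
        refine lintegral_congr_ae (ae_pos_expMeasure.mono fun b hb => ?_)
        dsimp only
        rw [expMeasure_Ioi hr (by positivity), ← ENNReal.ofReal_pow (exp_pos _).le,
          ← ENNReal.ofReal_mul (exp_pos _).le, ← exp_nat_mul, ← exp_add]
        ring_nf
    _ = _ := by
        rw [lintegral_const_mul _ (by fun_prop),
          lintegral_exp_neg_mul_expMeasure hr (by positivity)]
        congr 2
        field_simp
        norm_num

lemma lintegral_expMeasure_Iic (hr : 0 < r) :
    ∫⁻ t, expMeasure r (Iic t) ∂expMeasure r = ENNReal.ofReal (1 / 2) := by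
  have := isProbabilityMeasure_expMeasure hr
  have hlaplace := lintegral_exp_neg_mul_expMeasure hr (c := r) (by linarith)
  have hle : ∀ᵐ t ∂expMeasure r, ENNReal.ofReal (exp (-(r * t))) ≤ 1 :=
    ae_pos_expMeasure.mono fun t ht =>
      ENNReal.ofReal_le_one.2 (exp_le_one_iff.2 (by nlinarith))
  calc ∫⁻ t, expMeasure r (Iic t) ∂expMeasure r
      = ∫⁻ t, 1 - ENNReal.ofReal (exp (-(r * t))) ∂expMeasure r := by
        refine lintegral_congr_ae (ae_pos_expMeasure.mono fun t ht => ?_)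
        dsimp only
        rw [← compl_Ioi, prob_compl_eq_one_sub measurableSet_Ioi, expMeasure_Ioi hr ht.le]
    _ = 1 - ENNReal.ofReal (r / (r + r)) := by
        rw [lintegral_sub (by fun_prop) (hlaplace ▸ ENNReal.ofReal_ne_top) hle, lintegral_one,
          measure_univ, hlaplace]
    _ = ENNReal.ofReal (1 / 2) := by
        rw [← ENNReal.ofReal_one, ← ENNReal.ofReal_sub _ (by positivity)]
        congr 1
        field_simp
        norm_num

lemma lintegral_exp_neg_mul_max_sub_expMeasure (hr : 0 < r) {t : ℝ} (ht : 0 ≤ t) :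
    ∫⁻ a, ENNReal.ofReal (exp (-(2 * r * max (a - t) 0))) ∂expMeasure r
      = expMeasure r (Iic t) + ENNReal.ofReal (exp (-(r * t))) * ENNReal.ofReal (1 / 3) := by
  rw [← lintegral_add_compl _ (measurableSet_Ioi (a := t)), add_comm, compl_Ioi]
  congr 1
  · rw [setLIntegral_congr_fun measurableSet_Iic (g := fun _ => 1) fun a ha => by
      simp [max_eq_right (sub_nonpos.2 ha.out)]]
    simp
  · rw [setLIntegral_congr_fun measurableSet_Ioi
      (g := fun a => ENNReal.ofReal (exp (2 * r * t)) * ENNReal.ofReal (exp (-(2 * r * a))))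
      fun a ha => by
        dsimp only
        rw [max_eq_left (sub_nonneg.2 ha.out.le), ← ENNReal.ofReal_mul (exp_pos _).le,
          ← exp_add]
        ring_nf,
      lintegral_const_mul _ (by fun_prop),
      setLIntegral_Ioi_exp_neg_mul_expMeasure hr (by positivity) ht,
      ← ENNReal.ofReal_mul (exp_pos _).le, ← ENNReal.ofReal_mul (exp_pos _).le]
    congr 1
    rw [show r / (r + 2 * r) = 1 / 3 by field_simp; norm_num, mul_left_comm, ← exp_add]
    ring_nf

lemma lintegral_lintegral_exp_neg_mul_max_sub_expMeasure (hr : 0 < r) :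
    ∫⁻ t, ∫⁻ a, ENNReal.ofReal (exp (-(2 * r * max (a - t) 0))) ∂expMeasure r ∂expMeasure r
      = ENNReal.ofReal (2 / 3) := by
  calc ∫⁻ t, ∫⁻ a, ENNReal.ofReal (exp (-(2 * r * max (a - t) 0))) ∂expMeasure r ∂expMeasure r
      = ∫⁻ t, expMeasure r (Iic t) + ENNReal.ofReal (exp (-(r * t))) * ENNReal.ofReal (1 / 3)
          ∂expMeasure r :=
        lintegral_congr_ae (ae_pos_expMeasure.mono fun t ht =>
          lintegral_exp_neg_mul_max_sub_expMeasure hr ht.le)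
    _ = ENNReal.ofReal (1 / 2) + ENNReal.ofReal (r / (r + r)) * ENNReal.ofReal (1 / 3) := by
        rw [lintegral_add_right _ (by fun_prop), lintegral_expMeasure_Iic hr,
          lintegral_mul_const _ (by fun_prop), lintegral_exp_neg_mul_expMeasure hr (by linarith)]
    _ = ENNReal.ofReal (2 / 3) := by
        rw [← ENNReal.ofReal_mul (by positivity),
          ← ENNReal.ofReal_add (by norm_num) (by positivity)]
        congr 1
        field_simp
        norm_num

lemma lintegral_prod_expMeasure_Ioi_add_max_sub_sq (hr : 0 < r) :
    ∫⁻ x, expMeasure r (Ioi (x.2.2 + max (x.2.1 - x.1) 0)) ^ 2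
        ∂(expMeasure r).prod ((expMeasure r).prod (expMeasure r))
      = ENNReal.ofReal (2 / 9) := by
  have := isProbabilityMeasure_expMeasure hr
  rw [lintegral_prod _
    (by exact ((Measurable.measure_Ioi _ (by fun_prop)).pow_const 2).aemeasurable)]
  calc _ = ∫⁻ t, ∫⁻ a, ENNReal.ofReal (exp (-(2 * r * max (a - t) 0))) * ENNReal.ofReal (1 / 3)
          ∂expMeasure r ∂expMeasure r := by
        refine lintegral_congr fun t => ?_
        rw [lintegral_prod _
          (by exact ((Measurable.measure_Ioi _ (by fun_prop)).pow_const 2).aemeasurable)]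
        dsimp only
        exact lintegral_congr fun a => lintegral_expMeasure_Ioi_add_sq hr (le_max_right _ _)
    _ = ENNReal.ofReal (2 / 3) * ENNReal.ofReal (1 / 3) := by
        simp_rw [lintegral_mul_const' _ _ ENNReal.ofReal_ne_top]
        rw [lintegral_lintegral_exp_neg_mul_max_sub_expMeasure hr]
    _ = ENNReal.ofReal (2 / 9) := by
        rw [← ENNReal.ofReal_mul (by norm_num)]
        norm_num

end ProbabilityTheory

/-- For `X2, X3, X4, X5, X7` i.i.d. Exponential(1) (modeled as the five
coordinates of the product of exponential measures, with coordinate `0 = X2`, `1 = X3`,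
`2 = X4`, `3 = X5`, `4 = X7`),
`P(X3 < X4, X3 < X5, X2 + X3 < X4 + X7, X2 + X3 < X5 + X7) = 2/9`. -/
theorem stmt_1 :
    (Measure.pi fun _ : Fin 5 => expMeasure 1)
      {x | x 1 < x 2 ∧ x 1 < x 3 ∧ x 0 + x 1 < x 2 + x 4 ∧ x 0 + x 1 < x 3 + x 4}
      = 2 / 9 := by
  have := isProbabilityMeasure_expMeasure one_pos
  have hS : MeasurableSet
      {x : Fin 5 → ℝ | x 1 < x 2 ∧ x 1 < x 3 ∧ x 0 + x 1 < x 2 + x 4 ∧ x 0 + x 1 < x 3 + x 4} := by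
    measurability
  -- in the coordinates `((X7, X2, X3), (X4, X5))`
  have hpre : (fun p : (ℝ × ℝ × ℝ) × ℝ × ℝ => ![p.1.2.1, p.1.2.2, p.2.1, p.2.2, p.1.1]) ⁻¹'
      {x | x 1 < x 2 ∧ x 1 < x 3 ∧ x 0 + x 1 < x 2 + x 4 ∧ x 0 + x 1 < x 3 + x 4}
      = {p | p.1.2.2 + max (p.1.2.1 - p.1.1) 0 < p.2.1 ∧
          p.1.2.2 + max (p.1.2.1 - p.1.1) 0 < p.2.2} := by
    ext ⟨⟨t, a, b⟩, y, z⟩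
    simp only [mem_preimage, mem_ofPred_eq, Matrix.cons_val]
    grind
  rw [← (measurePreserving_prod_finFive (expMeasure 1)).measure_preimage hS.nullMeasurableSet,
    hpre, Measure.prod_setOf_lt_and_lt _ _
      (f := fun x : ℝ × ℝ × ℝ => x.2.2 + max (x.2.1 - x.1) 0) (by fun_prop),
    lintegral_prod_expMeasure_Ioi_add_max_sub_sq one_pos, ENNReal.ofReal_div_of_pos (by norm_num)]
  norm_num
end

section
/- Let X2, X3, X4, X5, X7 be i.i.d. Uniform[0,1] random variables. Then P(X3 < X4, X3 < X5, X2 + X3 < X4 + X7, X2 + X3 < X5 + X7) = 7/30. -/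
/-!
Condition on `X2 = a`, `X3 = b`, `X7 = e`. The four inequalities say exactly that `X4` and `X5`
both exceed `m = b + max (a - e) 0`, so the conditional probability is `(1 - m)₊ ^ 2`.
Integrating over `b` gives `(1 - max (a - e) 0) ^ 3 / 3`, and the remaining two integrals over
`a` and `e` give `7 / 30`.
-/

open MeasureTheory Set
open scoped ENNReal

lemma lintegral_pi_fin_five {α : Type*} [MeasurableSpace α] (μ : Measure α) [SigmaFinite μ]
    {f : (Fin 5 → α) → ℝ≥0∞} (hf : Measurable f) :
    ∫⁻ x, f x ∂Measure.pi (fun _ => μ) =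
      ∫⁻ a, ∫⁻ e, ∫⁻ b, ∫⁻ c, ∫⁻ d, f ![a, b, c, d, e] ∂μ ∂μ ∂μ ∂μ ∂μ := by
  rcases isEmpty_or_nonempty α with _ | ⟨⟨x₀⟩⟩
  · simp
  rw [lintegral_eq_lmarginal_univ (fun _ => x₀),
    show (Finset.univ : Finset (Fin 5)) = {0, 4, 1, 2, 3} by decide]
  simp (disch := decide) only [lmarginal_insert _ hf, lmarginal_singleton]
  refine lintegral_congr fun a => lintegral_congr fun e => lintegral_congr fun b =>
    lintegral_congr fun c => lintegral_congr fun d => congrArg f ?_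
  ext i
  fin_cases i <;> rfl

lemma lintegral_lintegral_indicator_one_mul {α : Type*} [MeasurableSpace α] (μ : Measure α)
    {s t : Set α} (hs : MeasurableSet s) (ht : MeasurableSet t) :
    ∫⁻ c, ∫⁻ d, s.indicator 1 c * t.indicator 1 d ∂μ ∂μ = μ s * μ t := by
  simp only [lintegral_const_mul _ (measurable_one.indicator ht), lintegral_indicator_one ht,
    lintegral_mul_const _ (measurable_one.indicator hs), lintegral_indicator_one hs]

lemma volume_restrict_Icc_zero_one_Ioi {m : ℝ} (hm : 0 ≤ m) :
    volume.restrict (Icc (0 : ℝ) 1) (Ioi m) = ENNReal.ofReal (1 - m) := by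
  have : Ioi m ∩ Icc 0 1 = Ioc m 1 := by
    ext
    simp only [mem_inter_iff, mem_Ioi, mem_Icc, mem_Ioc]
    grind
  rw [Measure.restrict_apply measurableSet_Ioi, this, Real.volume_Ioc]

lemma setLIntegral_Icc_ofReal {f : ℝ → ℝ} {a b : ℝ} (hab : a ≤ b)
    (hf : IntegrableOn f (Icc a b)) (hf₀ : ∀ x ∈ Icc a b, 0 ≤ f x) :
    ∫⁻ x in Icc a b, ENNReal.ofReal (f x) = ENNReal.ofReal (∫ x in a..b, f x) := by
  rw [intervalIntegral.integral_of_le hab, ← integral_Icc_eq_integral_Ioc,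
    ofReal_integral_eq_lintegral_ofReal hf
      ((ae_restrict_iff' measurableSet_Icc).2 (.of_forall hf₀))]

lemma integral_max_sub_zero_sq {t u : ℝ} (ht : 0 ≤ t) (htu : t ≤ u) :
    ∫ b in 0..u, max (t - b) 0 ^ 2 = t ^ 3 / 3 := by
  have hcont : Continuous fun b : ℝ => max (t - b) 0 ^ 2 := by fun_prop
  rw [← intervalIntegral.integral_add_adjacent_intervals (b := t)
    (hcont.intervalIntegrable _ _) (hcont.intervalIntegrable _ _)]
  have left : ∫ b in 0..t, max (t - b) 0 ^ 2 = ∫ b in 0..t, (t - b) ^ 2 :=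
    intervalIntegral.integral_congr fun b hb => by
      rw [uIcc_of_le ht] at hb
      simp only [max_eq_left (sub_nonneg.2 hb.2)]
  have right : ∫ b in t..u, max (t - b) 0 ^ 2 = ∫ _ in t..u, (0 : ℝ) :=
    intervalIntegral.integral_congr fun b hb => by
      rw [uIcc_of_le htu] at hb
      simp [max_eq_right (sub_nonpos.2 hb.1)]
  rw [left, right]
  norm_num [intervalIntegral.integral_comp_sub_left (fun x => x ^ 2)]

lemma integral_one_sub_max_sub_zero_pow_three {a : ℝ} (ha₀ : 0 ≤ a) (ha₁ : a ≤ 1) :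
    ∫ e in 0..1, (1 - max (a - e) 0) ^ 3 = (1 - (1 - a) ^ 4) / 4 + (1 - a) := by
  have hcont : Continuous fun e : ℝ => (1 - max (a - e) 0) ^ 3 := by fun_prop
  rw [← intervalIntegral.integral_add_adjacent_intervals (b := a)
    (hcont.intervalIntegrable _ _) (hcont.intervalIntegrable _ _)]
  have left : ∫ e in 0..a, (1 - max (a - e) 0) ^ 3 = ∫ e in 0..a, (1 - a + e) ^ 3 :=
    intervalIntegral.integral_congr fun e he => by
      rw [uIcc_of_le ha₀] at he
      simp only [max_eq_left (sub_nonneg.2 he.2)]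
      ring
  have right : ∫ e in a..1, (1 - max (a - e) 0) ^ 3 = ∫ _ in a..1, (1 : ℝ) :=
    intervalIntegral.integral_congr fun e he => by
      rw [uIcc_of_le ha₁] at he
      simp [max_eq_right (sub_nonpos.2 he.1)]
  rw [left, right]
  simp [intervalIntegral.integral_comp_add_left (fun x => x ^ 3)]
  ring

lemma integral_one_sub_one_sub_pow_four :
    ∫ a in (0 : ℝ)..1, ((1 - (1 - a) ^ 4) / 4 + (1 - a)) = 7 / 10 := by
  have reflect := intervalIntegral.integral_comp_sub_left
    (fun x : ℝ => (1 - x ^ 4) / 4 + x) (a := 0) (b := 1) 1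
  simp only [sub_zero, sub_self] at reflect
  rw [reflect, intervalIntegral.integral_add (Continuous.intervalIntegrable (by fun_prop) _ _)
    (Continuous.intervalIntegrable (by fun_prop) _ _)]
  norm_num

lemma lt_and_add_lt_add_iff {a b c e : ℝ} :
    b < c ∧ a + b < c + e ↔ b + max (a - e) 0 < c := by
  constructor
  · rintro ⟨h₁, h₂⟩
    exact add_lt_of_lt_sub_left (max_lt (by linarith) (by linarith))
  · intro h
    constructor <;> linarith [le_max_left (a - e) 0, le_max_right (a - e) 0]

lemma measurableSet_event : MeasurableSet
    {x : Fin 5 → ℝ | x 1 < x 2 ∧ x 1 < x 3 ∧ x 0 + x 1 < x 2 + x 4 ∧ x 0 + x 1 < x 3 + x 4} := by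
  measurability

lemma indicator_event_apply (a b c d e : ℝ) :
    {x : Fin 5 → ℝ | x 1 < x 2 ∧ x 1 < x 3 ∧ x 0 + x 1 < x 2 + x 4 ∧ x 0 + x 1 < x 3 + x 4}.indicator
        1 ![a, b, c, d, e] =
      (Ioi (b + max (a - e) 0)).indicator (1 : ℝ → ℝ≥0∞) c *
        (Ioi (b + max (a - e) 0)).indicator 1 d := by
  have hmem : ![a, b, c, d, e] ∈
      {x : Fin 5 → ℝ | x 1 < x 2 ∧ x 1 < x 3 ∧ x 0 + x 1 < x 2 + x 4 ∧ x 0 + x 1 < x 3 + x 4} ↔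
        c ∈ Ioi (b + max (a - e) 0) ∧ d ∈ Ioi (b + max (a - e) 0) := by
    simp only [mem_ofPred_eq, Matrix.cons_val, mem_Ioi, ← lt_and_add_lt_add_iff]
    tauto
  simp only [indicator_apply, hmem, ite_and, Pi.one_apply, ite_mul, one_mul, zero_mul]

lemma lintegral_volume_Ioi_add_mul_self {s : ℝ} (hs₀ : 0 ≤ s) (hs₁ : s ≤ 1) :
    ∫⁻ b in Icc 0 1,
        volume.restrict (Icc (0 : ℝ) 1) (Ioi (b + s)) * volume.restrict (Icc 0 1) (Ioi (b + s)) =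
      ENNReal.ofReal ((1 - s) ^ 3 / 3) := calc
  _ = ∫⁻ b in Icc 0 1, ENNReal.ofReal (max (1 - s - b) 0 ^ 2) :=
    setLIntegral_congr_fun measurableSet_Icc fun b hb => by
      rw [volume_restrict_Icc_zero_one_Ioi (by linarith [hb.1]), ← sq,
        ENNReal.ofReal_pow (le_max_right _ _), ENNReal.ofReal_max, sub_sub, add_comm s]
      simp
  _ = ENNReal.ofReal (∫ b in 0..1, max (1 - s - b) 0 ^ 2) :=
    setLIntegral_Icc_ofReal zero_le_one (Continuous.integrableOn_Icc (by fun_prop))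
      fun _ _ => by positivity
  _ = ENNReal.ofReal ((1 - s) ^ 3 / 3) := by
    rw [integral_max_sub_zero_sq (by linarith) (by linarith)]

lemma lintegral_ofReal_one_sub_max_sub_zero_pow_three {a : ℝ} (ha : a ∈ Icc (0 : ℝ) 1) :
    ∫⁻ e in Icc 0 1, ENNReal.ofReal ((1 - max (a - e) 0) ^ 3 / 3) =
      ENNReal.ofReal (((1 - (1 - a) ^ 4) / 4 + (1 - a)) / 3) := by
  rw [setLIntegral_Icc_ofReal zero_le_one (Continuous.integrableOn_Icc (by fun_prop)),
    intervalIntegral.integral_div, integral_one_sub_max_sub_zero_pow_three ha.1 ha.2]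
  intro e he
  have : max (a - e) 0 ≤ 1 := max_le (by linarith [ha.2, he.1]) zero_le_one
  have : 0 ≤ 1 - max (a - e) 0 := by linarith
  positivity

lemma lintegral_ofReal_one_sub_one_sub_pow_four :
    ∫⁻ a in Icc 0 1, ENNReal.ofReal (((1 - (1 - a) ^ 4) / 4 + (1 - a)) / 3) = 7 / 30 := by
  rw [setLIntegral_Icc_ofReal zero_le_one (Continuous.integrableOn_Icc (by fun_prop)),
    intervalIntegral.integral_div, integral_one_sub_one_sub_pow_four,
    show (7 / 10 / 3 : ℝ) = 7 / 30 by norm_num, ENNReal.ofReal_div_of_pos (by norm_num)]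
  · simp
  intro a ha
  have : (1 - a) ^ 4 ≤ 1 := pow_le_one₀ (by linarith [ha.2]) (by linarith [ha.1])
  have : 0 ≤ 1 - a := by linarith [ha.2]
  positivity

/-- Coordinates `0, 1, 2, 3, 4` of the product measure are `X2, X3, X4, X5, X7`. -/
theorem stmt_2 :
    (Measure.pi fun _ : Fin 5 => volume.restrict (Icc (0 : ℝ) 1))
      {x | x 1 < x 2 ∧ x 1 < x 3 ∧ x 0 + x 1 < x 2 + x 4 ∧ x 0 + x 1 < x 3 + x 4}
      = 7 / 30 := by
  rw [← lintegral_indicator_one measurableSet_event,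
    lintegral_pi_fin_five _ (measurable_one.indicator measurableSet_event)]
  simp only [indicator_event_apply,
    lintegral_lintegral_indicator_one_mul _ measurableSet_Ioi measurableSet_Ioi]
  calc _ = ∫⁻ a in Icc 0 1, ∫⁻ e in Icc 0 1, ENNReal.ofReal ((1 - max (a - e) 0) ^ 3 / 3) :=
        setLIntegral_congr_fun measurableSet_Icc fun a ha =>
          setLIntegral_congr_fun measurableSet_Icc fun e he =>
            lintegral_volume_Ioi_add_mul_self (le_max_right _ _)
              (max_le (by linarith [ha.2, he.1]) zero_le_one)
    _ = ∫⁻ a in Icc 0 1, ENNReal.ofReal (((1 - (1 - a) ^ 4) / 4 + (1 - a)) / 3) :=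
        setLIntegral_congr_fun measurableSet_Icc fun _ ha =>
          lintegral_ofReal_one_sub_max_sub_zero_pow_three ha
    _ = 7 / 30 := lintegral_ofReal_one_sub_one_sub_pow_four
end

section
/- For a cycle graph on n vertices (with both orientations of each edge given i.i.d. continuous weights and a fixed boundary vertex), the probability that the minimal spanning arborescence is any fixed one of the possible spanning arborescences does not depend on the continuous weight distribution, in the special case n = 3: on the directed triangle with one boundary vertex, the law of the MSA is the same for i.i.d. Exponential(1) weights and i.i.d. Uniform[0,1] weights. -/
open MeasureTheory ProbabilityTheory Set

/-- A spanning arborescence of the directed triangle on vertices `{0, 1, 2}` with boundary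
vertex `∂ = 2`: vertex `0` sends its unique outgoing edge to `a`, vertex `1` sends its
unique outgoing edge to `b`, there are no self-loops, and no directed cycle
(the only possible one being `0 → 1 → 0`). -/
def TriangleArb (a b : Fin 3) : Prop := a ≠ 0 ∧ b ≠ 1 ∧ ¬(a = 1 ∧ b = 0)

/-- The event (in the space of weights `w : Fin 3 × Fin 3 → ℝ` on oriented edges) that the
arborescence `{0 → a, 1 → b}` is the minimal spanning arborescence of the triangle with
boundary `2`, i.e. has strictly smaller total weight than every other spanning
arborescence. -/
def TriangleMSAEvent (a b : Fin 3) : Set (Fin 3 × Fin 3 → ℝ) :=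
  {w | ∀ a' b', TriangleArb a' b' → (a', b') ≠ (a, b) →
    w (0, a) + w (1, b) < w (0, a') + w (1, b')}

/-!
The three arborescences are `0 → 1 → ∂`, `1 → 0 → ∂` and `0 → ∂ ← 1`. The last one is
minimal iff both vertices prefer their edge to `∂`: two events, each mapped to its complement
(up to a null set of ties) by exchanging the two outgoing weights of one vertex and preserved by
exchanging those of the other, so it has probability `1/4`. Exchanging the vertices `0` and `1`
preserves this event and swaps the costs of the other two arborescences, which therefore share
the remaining `3/4` equally. Only exchangeability of i.i.d. weights and the absence of ties are
used, and both hold for every atomless law.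
-/

namespace MeasureTheory

theorem measurePreserving_comp_equiv {ι : Type*} [Fintype ι] (μ : Measure ℝ) [SigmaFinite μ]
    (e : ι ≃ ι) :
    MeasurePreserving (fun w : ι → ℝ => w ∘ e) (Measure.pi fun _ => μ) (Measure.pi fun _ => μ) := by
  convert measurePreserving_arrowCongr' (fun _ => μ) (fun _ => μ) e.symm (MeasurableEquiv.refl ℝ)
    fun _ => MeasurePreserving.id μ
  ext w
  simp [MeasurableEquiv.arrowCongr', Equiv.arrowCongr']

theorem measure_pi_setOf_eval_eq_null {δ : Type*} [Fintype δ] [DecidableEq δ]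
    (μ : δ → Measure ℝ) [∀ j, SigmaFinite (μ j)] (i : δ) [NullSingletonClass (μ i)]
    {φ : (δ → ℝ) → ℝ} (hφ : Measurable φ) (hφi : ∀ x c, φ (Function.update x i c) = φ x) :
    Measure.pi μ {x | x i = φ x} = 0 := by
  set S := {x : δ → ℝ | x i = φ x}
  have hS : MeasurableSet S := measurableSet_eq_fun (measurable_pi_apply i) hφ
  have hsection (x : δ → ℝ) : ∫⁻ c, S.indicator 1 (Function.update x i c) ∂μ i = 0 := by
    have hslice : (fun c => S.indicator (1 : (δ → ℝ) → ENNReal) (Function.update x i c))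
        = ({φ x} : Set ℝ).indicator 1 := by
      ext c
      simp [S, Set.indicator_apply, hφi]
    rw [hslice, lintegral_indicator_one (measurableSet_singleton _), measure_singleton]
  rw [← lintegral_indicator_one hS, lintegral_eq_lmarginal_univ 0,
    ← Finset.insert_erase (Finset.mem_univ i),
    lmarginal_insert' _ (measurable_one.indicator hS) (Finset.notMem_erase i _)]
  simp [hsection, lmarginal]

theorem measure_pi_setOf_eval_eq_eval_null {δ : Type*} [Fintype δ] [DecidableEq δ]
    (μ : Measure ℝ) [SigmaFinite μ] [NullSingletonClass μ] {i j : δ} (hij : i ≠ j) :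
    (Measure.pi fun _ : δ => μ) {x | x i = x j} = 0 :=
  measure_pi_setOf_eval_eq_null _ i (measurable_pi_apply j)
    fun _ _ => Function.update_of_ne hij.symm _ _

section Exchange

variable {Ω : Type*} [MeasurableSpace Ω] {P : Measure Ω} {T : Ω → Ω} {g h : Ω → ℝ} {A : Set Ω}

theorem measure_inter_lt_comm (hT : MeasurePreserving T P P) (hg : Measurable g)
    (hh : Measurable h) (hgT : ∀ ω, g (T ω) = h ω) (hhT : ∀ ω, h (T ω) = g ω)
    (hA : MeasurableSet A) (hTA : T ⁻¹' A = A) :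
    P (A ∩ {ω | h ω < g ω}) = P (A ∩ {ω | g ω < h ω}) := by
  rw [← hT.measure_preimage (hA.inter (measurableSet_lt hg hh)).nullMeasurableSet,
    preimage_inter, hTA]
  simp only [preimage_ofPred_eq, hgT, hhT]

theorem measure_inter_lt_eq_half (hT : MeasurePreserving T P P) (hg : Measurable g)
    (hh : Measurable h) (hgT : ∀ ω, g (T ω) = h ω) (hhT : ∀ ω, h (T ω) = g ω)
    (htie : P {ω | g ω = h ω} = 0) (hA : MeasurableSet A) (hTA : T ⁻¹' A = A) :
    P (A ∩ {ω | g ω < h ω}) = P A / 2 := by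
  have hsplit : P (A ∩ {ω | g ω < h ω}) + P (A ∩ {ω | h ω < g ω}) = P A := by
    rw [← measure_inter_add_sdiff A (measurableSet_lt hg hh),
      ← measure_sdiff_null (s := A \ {ω | g ω < h ω}) htie]
    congr 2
    ext ω
    simp only [mem_sdiff, mem_inter_iff, mem_ofPred_eq, not_lt]
    exact ⟨fun ⟨hA, hlt⟩ => ⟨⟨hA, hlt.le⟩, hlt.ne'⟩,
      fun ⟨⟨hA, hle⟩, hne⟩ => ⟨hA, hle.lt_of_ne' hne⟩⟩
  rw [ENNReal.eq_div_iff two_ne_zero ENNReal.ofNat_ne_top, ← hsplit,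
    measure_inter_lt_comm hT hg hh hgT hhT hA hTA, two_mul]

end Exchange

end MeasureTheory

theorem triangleArb_iff {a b : Fin 3} :
    TriangleArb a b ↔ a = 1 ∧ b = 2 ∨ a = 2 ∧ b = 0 ∨ a = 2 ∧ b = 2 := by
  unfold TriangleArb
  revert a b
  decide

theorem triangleMSAEvent_one_two : TriangleMSAEvent 1 2 =
    {w | w (0, 1) + w (1, 2) < w (0, 2) + w (1, 0) ∧ w (0, 1) < w (0, 2)} := by
  ext w
  simp [TriangleMSAEvent, triangleArb_iff, or_imp, forall_and]

theorem triangleMSAEvent_two_zero : TriangleMSAEvent 2 0 =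
    {w | w (0, 2) + w (1, 0) < w (0, 1) + w (1, 2) ∧ w (1, 0) < w (1, 2)} := by
  ext w
  simp [TriangleMSAEvent, triangleArb_iff, or_imp, forall_and]

theorem triangleMSAEvent_two_two : TriangleMSAEvent 2 2 =
    {w | w (0, 2) < w (0, 1) ∧ w (1, 2) < w (1, 0)} := by
  ext w
  simp [TriangleMSAEvent, triangleArb_iff, or_imp, forall_and]

theorem measurableSet_triangleMSAEvent (a b : Fin 3) : MeasurableSet (TriangleMSAEvent a b) := by
  simp only [TriangleMSAEvent, ofPred_forall]
  exact .iInter fun _ => .iInter fun _ => .iInter fun _ => .iInter fun _ =>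
    measurableSet_lt (by fun_prop) (by fun_prop)

def vertexSwapEdgePerm : Fin 3 × Fin 3 ≃ Fin 3 × Fin 3 := .prodCongr (.swap 0 1) (.swap 0 1)

section IID

variable (μ : Measure ℝ) [IsProbabilityMeasure μ] [NullSingletonClass μ]

theorem measure_triangleMSAEvent_two_two :
    (Measure.pi fun _ => μ) (TriangleMSAEvent 2 2) = 1 / 4 := by
  have hswap (p q : Fin 3 × Fin 3) := measurePreserving_comp_equiv μ (Equiv.swap p q)
  have hhalf : (Measure.pi fun _ => μ) {w : Fin 3 × Fin 3 → ℝ | w (0, 2) < w (0, 1)} = 1 / 2 := by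
    simpa using measure_inter_lt_eq_half (hswap (0, 1) (0, 2))
      (measurable_pi_apply _) (measurable_pi_apply _) (by simp) (by simp)
      (measure_pi_setOf_eval_eq_eval_null μ (by decide)) MeasurableSet.univ rfl
  have hquarter := measure_inter_lt_eq_half (hswap (1, 0) (1, 2)) (g := fun w => w (1, 2))
    (h := fun w => w (1, 0)) (measurable_pi_apply _) (measurable_pi_apply _) (by simp) (by simp)
    (measure_pi_setOf_eval_eq_eval_null μ (by decide))
    (measurableSet_lt (measurable_pi_apply (0, 2)) (measurable_pi_apply (0, 1)))
    (by ext w; simp [Equiv.swap_apply_of_ne_of_ne])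
  rw [triangleMSAEvent_two_two, ofPred_and, hquarter, hhalf,
    ← ENNReal.toReal_eq_toReal_iff' (by finiteness) (by finiteness)]
  simp only [ENNReal.toReal_div, ENNReal.toReal_one, ENNReal.toReal_ofNat]
  norm_num

theorem measure_triangleMSAEvent_one_two :
    (Measure.pi fun _ => μ) (TriangleMSAEvent 1 2) = 3 / 8 := by
  have hT := measurePreserving_comp_equiv μ vertexSwapEdgePerm
  set A := (TriangleMSAEvent 2 2)ᶜ
  have hTA : (· ∘ vertexSwapEdgePerm) ⁻¹' A = A := by
    ext w
    simp [A, triangleMSAEvent_two_two, vertexSwapEdgePerm, Equiv.swap_apply_def, and_comm]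
  have htie : (Measure.pi fun _ => μ)
      {w : Fin 3 × Fin 3 → ℝ | w (0, 1) + w (1, 2) = w (0, 2) + w (1, 0)} = 0 := by
    simp_rw [← eq_sub_iff_add_eq]
    exact measure_pi_setOf_eval_eq_null (fun _ => μ) (0, 1) (by fun_prop)
      fun x c => by simp [Function.update_of_ne]
  have hE : TriangleMSAEvent 1 2 = (A ∩ {w | w (0, 1) + w (1, 2) < w (0, 2) + w (1, 0)}) \
      {w | w (0, 1) = w (0, 2)} := by
    ext w
    simp only [A, triangleMSAEvent_two_two, triangleMSAEvent_one_two, mem_sdiff, mem_inter_iff,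
      mem_compl_iff, mem_ofPred_eq]
    grind
  rw [hE, measure_sdiff_null (measure_pi_setOf_eval_eq_eval_null μ (by decide)),
    measure_inter_lt_eq_half hT (by fun_prop) (by fun_prop)
      (by simp [vertexSwapEdgePerm, Equiv.swap_apply_def, add_comm])
      (by simp [vertexSwapEdgePerm, Equiv.swap_apply_def, add_comm])
      htie (measurableSet_triangleMSAEvent 2 2).compl hTA,
    prob_compl_eq_one_sub (measurableSet_triangleMSAEvent 2 2), measure_triangleMSAEvent_two_two,
    ← ENNReal.toReal_eq_toReal_iff' (by finiteness) (by finiteness),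
    ENNReal.toReal_div, ENNReal.toReal_sub_of_le (by norm_num) (by simp)]
  norm_num

theorem measure_triangleMSAEvent_two_zero :
    (Measure.pi fun _ => μ) (TriangleMSAEvent 2 0) = 3 / 8 := by
  rw [← measure_triangleMSAEvent_one_two μ,
    ← (measurePreserving_comp_equiv μ vertexSwapEdgePerm).measure_preimage
      (measurableSet_triangleMSAEvent 1 2).nullMeasurableSet]
  congr 1
  ext w
  simp [triangleMSAEvent_one_two, triangleMSAEvent_two_zero, vertexSwapEdgePerm,
    Equiv.swap_apply_def, add_comm]

end IID

theorem measure_pi_triangleMSAEvent_eq (μ ν : Measure ℝ) [IsProbabilityMeasure μ]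
    [NullSingletonClass μ] [IsProbabilityMeasure ν] [NullSingletonClass ν] {a b : Fin 3}
    (hab : TriangleArb a b) :
    (Measure.pi fun _ => μ) (TriangleMSAEvent a b) =
      (Measure.pi fun _ => ν) (TriangleMSAEvent a b) := by
  rcases triangleArb_iff.1 hab with ⟨rfl, rfl⟩ | ⟨rfl, rfl⟩ | ⟨rfl, rfl⟩
  · rw [measure_triangleMSAEvent_one_two, measure_triangleMSAEvent_one_two]
  · rw [measure_triangleMSAEvent_two_zero, measure_triangleMSAEvent_two_zero]
  · rw [measure_triangleMSAEvent_two_two, measure_triangleMSAEvent_two_two]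

/-- On the directed triangle with vertices `{v1, v2, ∂} = {0, 1, 2}`, all six
oriented edges carrying i.i.d. weights, the law of the minimal spanning arborescence is the
same for i.i.d. Exponential(1) weights and i.i.d. Uniform[0,1] weights: for every spanning
arborescence, the probability that it is the MSA is the same under both product measures. -/
theorem stmt_5 (a b : Fin 3) (hab : TriangleArb a b) :
    (Measure.pi fun _ : Fin 3 × Fin 3 => expMeasure 1) (TriangleMSAEvent a b)
      = (Measure.pi fun _ : Fin 3 × Fin 3 => volume.restrict (Icc (0 : ℝ) 1))
          (TriangleMSAEvent a b) := by
  have : IsProbabilityMeasure (expMeasure 1) := isProbabilityMeasure_expMeasure one_pos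
  have : NullSingletonClass (expMeasure 1) :=
    inferInstanceAs (NullSingletonClass (volume.withDensity _))
  have : IsProbabilityMeasure (volume.restrict (Icc (0 : ℝ) 1)) := ⟨by simp⟩
  exact measure_pi_triangleMSAEvent_eq _ _ hab
end

section
/- Let G be a finite connected directed multigraph with boundary vertex ∂, and let C be a directed cycle in G not passing through ∂. If T' is a spanning arborescence of the contracted graph Ψ_contr((G,∂),C), then the uncontraction T = Ψ_ucontr((G,∂),(G',∂),C,T') is a spanning arborescence of (G,∂). -/
open scoped Classical

/-- A directed multigraph on vertex type `V` with oriented-edge type `E`. -/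
structure DirMultigraph (V : Type*) (E : Type*) where
  tail : E → V
  head : E → V

namespace DirMultigraph

variable {V E : Type*} (G : DirMultigraph V E)

/-- `G` has no self-loops. -/
def NoSelfLoops : Prop := ∀ e : E, G.tail e ≠ G.head e

/-- `G` is connected as an undirected multigraph. -/
def Connected : Prop :=
  ∀ u v : V, Relation.ReflTransGen
    (fun a b => ∃ e : E, (G.tail e = a ∧ G.head e = b) ∨ (G.tail e = b ∧ G.head e = a)) u v

/-- The set of edges `S` contains a directed cycle (a nonempty cyclically indexed family of
pairwise distinct edges, the head of each being the tail of the next). -/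
def HasCycleIn (S : Set E) : Prop :=
  ∃ (n : ℕ) (c : ZMod n → E), 0 < n ∧ Function.Injective c ∧
    (∀ i, c i ∈ S) ∧ ∀ i, G.head (c i) = G.tail (c (i + 1))

/-- `S` is a spanning arborescence of `(G, bd)`: every vertex other than the boundary `bd`
has exactly one outgoing edge in `S`, the boundary has none, and there are no directed
cycles. -/
def IsArborescence (bd : V) (S : Set E) : Prop :=
  (∀ v : V, v ≠ bd → ∃! e, e ∈ S ∧ G.tail e = v) ∧
  (∀ e ∈ S, G.tail e ≠ bd) ∧ ¬ G.HasCycleIn S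

/-- `C` is the edge set of a (vertex-)simple directed cycle. -/
def IsCycleSet (C : Set E) : Prop :=
  ∃ (n : ℕ) (c : ZMod n → E), 0 < n ∧ Function.Injective c ∧
    Function.Injective (fun i => G.tail (c i)) ∧
    (∀ i, G.head (c i) = G.tail (c (i + 1))) ∧ Set.range c = C

/-- The set of vertices that are endpoints of edges in `S`. -/
def verts (S : Set E) : Set V := {v | ∃ e ∈ S, G.tail e = v ∨ G.head e = v}

/-- The edges surviving the contraction of the vertex set `A`: those not having both
endpoints in `A`. -/
abbrev ContractedE (A : Set V) : Type _ := {e : E // G.tail e ∉ A ∨ G.head e ∉ A}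

/-- Contraction of the vertex set `A` into a single new vertex (`none`): edges with both
endpoints in `A` (which would become self-loops) are deleted, and edges with exactly one
endpoint in `A` are redirected to the new vertex `none`; vertices outside `A` are kept. -/
noncomputable def contract (A : Set V) : DirMultigraph (Option {v : V // v ∉ A}) (G.ContractedE A) where
  tail e := if h : G.tail e.1 ∈ A then none else some ⟨G.tail e.1, h⟩
  head e := if h : G.head e.1 ∈ A then none else some ⟨G.head e.1, h⟩

/-- The weights `w` are generic: no nontrivial integer combination of the nonzero weights
vanishes. -/
def Generic (w : E → ℝ) : Prop :=
  ∀ (s : Finset E) (n : E → ℤ), (∀ e ∈ s, w e ≠ 0) → (∃ e ∈ s, n e ≠ 0) →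
    ∑ e ∈ s, (n e : ℝ) * w e ≠ 0

/-- The total weight of a set of edges. -/
noncomputable def wsum [Fintype E] (w : E → ℝ) (S : Set E) : ℝ :=
  ∑ e : E, S.indicator w e

/-- `T` is a minimal spanning arborescence of `(G, bd)` for the weights `w`. -/
def IsMSA [Fintype E] (bd : V) (w : E → ℝ) (T : Set E) : Prop :=
  G.IsArborescence bd T ∧
    ∀ T' : Set E, G.IsArborescence bd T' → wsum w T ≤ wsum w T'

end DirMultigraph

open DirMultigraph

/-! Outside `C` the out-edges of `T` are those of `T'`; on `C` every vertex keeps its cycle edge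
except the tail of `eC`, which uses `f` instead. A directed cycle in `T` either lies in `C`, so it
is all of `C` and contains `eC`, or, once its stretches inside `C` are collapsed, its remaining
edges form a directed cycle of `T'` in the contracted graph. -/

theorem Function.periodicPts_nonempty {α : Type*} [Finite α] [Nonempty α] (f : α → α) :
    (Function.periodicPts f).Nonempty := by
  obtain ⟨a, b, hab, heq⟩ :=
    Finite.exists_ne_map_eq_of_infinite fun n : ℕ => f^[n] (Classical.arbitrary α)
  wlog hlt : a < b generalizing a b
  · exact this b a hab.symm heq.symm (by omega)
  refine ⟨f^[a] (Classical.arbitrary α), b - a, by omega, ?_⟩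
  rw [Function.IsPeriodicPt, Function.IsFixedPt, ← Function.iterate_add_apply,
    Nat.sub_add_cancel hlt.le]
  exact heq.symm

namespace DirMultigraph

variable {V E : Type*} (G : DirMultigraph V E)

variable {G} in
theorem HasCycleIn.mono {S S' : Set E} (h : G.HasCycleIn S) (hSS' : S ⊆ S') :
    G.HasCycleIn S' := by
  obtain ⟨n, c, hn, hinj, hS, hc⟩ := h
  exact ⟨n, c, hn, hinj, fun i => hSS' (hS i), hc⟩

theorem hasCycleIn_of_forall_exists_succ {X : Set E} (hfin : X.Finite) (hne : X.Nonempty)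
    (hsucc : ∀ e ∈ X, ∃ e' ∈ X, G.head e = G.tail e') : G.HasCycleIn X := by
  have := hfin.to_subtype
  have := hne.to_subtype
  choose F hFX hF using hsucc
  let next : X → X := fun e => ⟨F e e.2, hFX e e.2⟩
  obtain ⟨x, hx⟩ := Function.periodicPts_nonempty next
  set p := Function.minimalPeriod next x
  have hp : 0 < p := Function.minimalPeriod_pos_of_mem_periodicPts hx
  have : NeZero p := ⟨hp.ne'⟩
  refine ⟨p, fun k => (next^[k.val] x).1, hp, fun k l hkl => ?_, fun k => (next^[k.val] x).2,
    fun k => ?_⟩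
  · exact ZMod.val_injective p <| Function.iterate_injOn_Iio_minimalPeriod (ZMod.val_lt k)
      (ZMod.val_lt l) (Subtype.ext hkl)
  · have hval : (k + 1).val = (k.val + 1) % p := by
      rw [ZMod.val_add, ZMod.val_one_eq_one_mod, Nat.add_mod_mod]
    dsimp only
    rw [hval, Function.iterate_mod_minimalPeriod_eq, Function.iterate_succ_apply']
    exact hF _ _

theorem tail_mem_verts {S : Set E} {e : E} (he : e ∈ S) : G.tail e ∈ G.verts S :=
  ⟨e, he, Or.inl rfl⟩

theorem head_mem_verts {S : Set E} {e : E} (he : e ∈ S) : G.head e ∈ G.verts S :=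
  ⟨e, he, Or.inr rfl⟩

/-- `j` is the next index after `i` with `d j ∉ K`: `π` collapses the stretch of the walk
between `d i` and `d j` to a single point. -/
theorem exists_next_notMem_of_closed_walk {W : Type*} (π : V → W) (K : Set E)
    (hK : ∀ e ∈ K, π (G.tail e) = π (G.head e)) {n : ℕ} [NeZero n] (d : ZMod n → E)
    (hd : ∀ i, G.head (d i) = G.tail (d (i + 1))) {i : ZMod n} (hi : d i ∉ K) :
    ∃ j, d j ∉ K ∧ π (G.head (d i)) = π (G.tail (d j)) := by
  have hex : ∃ k : ℕ, d (i + (k + 1 : ℕ)) ∉ K :=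
    ⟨n - 1, by rwa [Nat.sub_add_cancel NeZero.one_le, ZMod.natCast_self, add_zero]⟩
  refine ⟨_, Nat.find_spec hex, ?_⟩
  suffices ∀ k ≤ Nat.find hex, π (G.head (d i)) = π (G.tail (d (i + (k + 1 : ℕ)))) from
    this _ le_rfl
  intro k hk
  induction k with
  | zero => simp [hd i]
  | succ k ih =>
    have hkK : d (i + (k + 1 : ℕ)) ∈ K := not_not.mp (Nat.find_min hex (by omega))
    rw [ih (by omega), hK _ hkK, hd, add_assoc]
    push_cast
    ring_nf

namespace IsCycleSet

variable {G} {C : Set E} (hC : G.IsCycleSet C)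
include hC

theorem eq_of_tail_eq {e e' : E} (he : e ∈ C) (he' : e' ∈ C) (h : G.tail e = G.tail e') :
    e = e' := by
  obtain ⟨n, c, -, -, htinj, -, rfl⟩ := hC
  obtain ⟨i, rfl⟩ := he
  obtain ⟨j, rfl⟩ := he'
  rw [htinj h]

theorem exists_mem_tail_eq {v : V} (hv : v ∈ G.verts C) : ∃ e ∈ C, G.tail e = v := by
  obtain ⟨n, c, -, -, -, hc, rfl⟩ := hC
  obtain ⟨_, ⟨i, rfl⟩, rfl | rfl⟩ := hv
  · exact ⟨c i, ⟨i, rfl⟩, rfl⟩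
  · exact ⟨c (i + 1), ⟨i + 1, rfl⟩, (hc i).symm⟩

theorem subset_range_of_closed_walk {n : ℕ} (d : ZMod n → E) (hdC : ∀ i, d i ∈ C)
    (hd : ∀ i, G.head (d i) = G.tail (d (i + 1))) : C ⊆ Set.range d := by
  obtain ⟨m, c, hm, -, htinj, hc, rfl⟩ := hC
  have : NeZero m := ⟨hm.ne'⟩
  have hstep : ∀ j, c j ∈ Set.range d → c (j + 1) ∈ Set.range d := by
    rintro j ⟨i, hij⟩
    obtain ⟨k, hk⟩ := hdC (i + 1)
    refine ⟨i + 1, ?_⟩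
    rw [← hk, htinj (show G.tail (c k) = G.tail (c (j + 1)) by rw [hk, ← hd, hij, hc])]
  obtain ⟨j₀, hj₀⟩ := hdC 0
  have hiter : ∀ k : ℕ, c (j₀ + k) ∈ Set.range d := by
    intro k
    induction k with
    | zero => exact ⟨0, by simp [hj₀]⟩
    | succ k ih => simpa [add_assoc] using hstep _ ih
  rintro _ ⟨j, rfl⟩
  simpa using hiter (j - j₀).val

end IsCycleSet

variable {G} in
theorem IsArborescence.eq_of_tail_eq {bd : V} {S : Set E} (hS : G.IsArborescence bd S)
    {e e' : E} (he : e ∈ S) (he' : e' ∈ S) (h : G.tail e = G.tail e') : e = e' :=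
  (hS.1 _ (hS.2.1 e he)).unique ⟨he, rfl⟩ ⟨he', h.symm⟩

noncomputable def contractVertex (A : Set V) (v : V) : Option {v : V // v ∉ A} :=
  if h : v ∈ A then none else some ⟨v, h⟩

theorem contract_tail (A : Set V) (e : G.ContractedE A) :
    (G.contract A).tail e = contractVertex A (G.tail e.1) := rfl

theorem contract_head (A : Set V) (e : G.ContractedE A) :
    (G.contract A).head e = contractVertex A (G.head e.1) := rfl

theorem contractVertex_eq_none_iff {A : Set V} {v : V} : contractVertex A v = none ↔ v ∈ A := by
  unfold contractVertex
  split_ifs with h <;> simp [h]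

theorem contractVertex_eq_some_iff {A : Set V} {v : V} {w : {v : V // v ∉ A}} :
    contractVertex A v = some w ↔ v = w.1 := by
  unfold contractVertex
  split_ifs with h
  · simp only [false_iff]
    rintro rfl
    exact w.2 h
  · simp [Subtype.ext_iff]

section Uncontract

variable {G} {C : Set E} {bd : V} {hbd : bd ∉ G.verts C} {T' : Set (G.ContractedE (G.verts C))}

theorem val_notMem_of_contractedE (e : G.ContractedE (G.verts C)) : e.1 ∉ C := fun he =>
  e.2.elim (· (G.tail_mem_verts he)) (· (G.head_mem_verts he))

theorem tail_ne_of_mem_uncontract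
    (hT' : (G.contract (G.verts C)).IsArborescence (some ⟨bd, hbd⟩) T')
    {e : E} (he : e ∈ C ∪ Subtype.val '' T') : G.tail e ≠ bd := by
  rintro rfl
  rcases he with he | ⟨e', he', rfl⟩
  · exact hbd (G.tail_mem_verts he)
  · exact hT'.2.1 e' he' (contractVertex_eq_some_iff.mpr rfl)

theorem eq_of_tail_mem_verts
    (hT' : (G.contract (G.verts C)).IsArborescence (some ⟨bd, hbd⟩) T')
    {e e' : G.ContractedE (G.verts C)} (he : e ∈ T') (he' : e' ∈ T')
    (h : G.tail e.1 ∈ G.verts C) (h' : G.tail e'.1 ∈ G.verts C) : e = e' :=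
  hT'.eq_of_tail_eq he he' <| by
    rw [contract_tail, contract_tail, contractVertex_eq_none_iff.mpr h,
      contractVertex_eq_none_iff.mpr h']

theorem existsUnique_tail_uncontract (hC : G.IsCycleSet C)
    (hT' : (G.contract (G.verts C)).IsArborescence (some ⟨bd, hbd⟩) T')
    {f : G.ContractedE (G.verts C)} (hfT : f ∈ T') (hf : G.tail f.1 ∈ G.verts C) {eC : E}
    (heC : eC ∈ C) (heCf : G.tail eC = G.tail f.1) {v : V} (hv : v ≠ bd) :
    ∃! e, e ∈ (C ∪ Subtype.val '' T') \ {eC} ∧ G.tail e = v := by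
  by_cases hvA : v ∈ G.verts C
  · by_cases hveC : v = G.tail eC
    · have hfeC : f.1 ≠ eC := fun h => val_notMem_of_contractedE f (h ▸ heC)
      refine ⟨f.1, ⟨⟨Or.inr ⟨f, hfT, rfl⟩, hfeC⟩, by rw [hveC, heCf]⟩, ?_⟩
      rintro e ⟨⟨he | ⟨e', he', rfl⟩, hne⟩, rfl⟩
      · exact absurd (hC.eq_of_tail_eq he heC hveC) hne
      · exact congrArg Subtype.val (eq_of_tail_mem_verts hT' he' hfT hvA hf)
    · obtain ⟨e₀, he₀, rfl⟩ := hC.exists_mem_tail_eq hvA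
      refine ⟨e₀, ⟨⟨Or.inl he₀, fun h => hveC (by rw [h])⟩, rfl⟩, ?_⟩
      rintro e ⟨⟨he | ⟨e', he', rfl⟩, -⟩, hte⟩
      · exact hC.eq_of_tail_eq he he₀ hte
      · rw [← hte, eq_of_tail_mem_verts hT' he' hfT (hte ▸ hvA) hf, heCf] at hveC
        exact absurd rfl hveC
  · obtain ⟨e', ⟨he', hte'⟩, huniq⟩ :=
      hT'.1 (some ⟨v, hvA⟩) (fun h => hv (congrArg Subtype.val (Option.some_injective _ h)))
    rw [contract_tail, contractVertex_eq_some_iff] at hte'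
    dsimp only at hte'
    have he'eC : e'.1 ≠ eC := fun h => hvA (by rw [← hte', h]; exact G.tail_mem_verts heC)
    refine ⟨e'.1, ⟨⟨Or.inr ⟨e', he', rfl⟩, he'eC⟩, hte'⟩, ?_⟩
    rintro e ⟨⟨he | ⟨e'', he'', rfl⟩, -⟩, rfl⟩
    · exact absurd (G.tail_mem_verts he) hvA
    · exact congrArg Subtype.val (huniq e'' ⟨he'', contractVertex_eq_some_iff.mpr rfl⟩)

theorem not_hasCycleIn_uncontract (hC : G.IsCycleSet C)
    (hT' : (G.contract (G.verts C)).IsArborescence (some ⟨bd, hbd⟩) T') {eC : E}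
    (heC : eC ∈ C) :
    ¬ G.HasCycleIn ((C ∪ Subtype.val '' T') \ {eC}) := by
  rintro ⟨n, d, hn, -, hdT, hd⟩
  have : NeZero n := ⟨hn.ne'⟩
  by_cases hdC : ∀ i, d i ∈ C
  · obtain ⟨i, hi⟩ := hC.subset_range_of_closed_walk d hdC hd heC
    exact (hdT i).2 hi
  have hlift : ∀ i, d i ∉ C → ∃ e ∈ T', e.1 = d i := fun i hi => (hdT i).1.resolve_left hi
  have hcollapse : ∀ e ∈ C, contractVertex (G.verts C) (G.tail e) =
      contractVertex (G.verts C) (G.head e) := fun e he => by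
    rw [contractVertex_eq_none_iff.mpr (G.tail_mem_verts he),
      contractVertex_eq_none_iff.mpr (G.head_mem_verts he)]
  apply hT'.2.2
  refine ((G.contract (G.verts C)).hasCycleIn_of_forall_exists_succ
    (X := {e | e ∈ T' ∧ e.1 ∈ Set.range d}) ?_ ?_ ?_).mono fun e he => he.1
  · exact ((Set.finite_range d).preimage Subtype.val_injective.injOn).subset fun e he => he.2
  · obtain ⟨i, hi⟩ := not_forall.mp hdC
    obtain ⟨e, he, hed⟩ := hlift i hi
    exact ⟨e, he, i, hed.symm⟩
  · rintro e ⟨-, i, hi⟩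
    obtain ⟨j, hj, hij⟩ := G.exists_next_notMem_of_closed_walk _ C hcollapse d hd
      (hi ▸ val_notMem_of_contractedE e)
    obtain ⟨e', he', hej⟩ := hlift j hj
    exact ⟨e', ⟨he', j, hej.symm⟩, by rw [contract_head, contract_tail, ← hi, hej, hij]⟩

end Uncontract

end DirMultigraph

theorem stmt_6_general {V E : Type} (G : DirMultigraph V E)
    (bd : V)
    (C : Set E) (hC : G.IsCycleSet C) (hbd : bd ∉ G.verts C)
    (T' : Set (G.ContractedE (G.verts C)))
    (hT' : (G.contract (G.verts C)).IsArborescence (some ⟨bd, hbd⟩) T')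
    (f : G.ContractedE (G.verts C)) (hfT : f ∈ T') (hf : G.tail f.1 ∈ G.verts C)
    (eC : E) (heC : eC ∈ C) (heCf : G.tail eC = G.tail f.1) :
    G.IsArborescence bd ((C ∪ (Subtype.val '' T')) \ {eC}) :=
  ⟨fun _ hv => existsUnique_tail_uncontract hC hT' hfT hf heC heCf hv,
    fun _ he => tail_ne_of_mem_uncontract hT' he.1,
    not_hasCycleIn_uncontract hC hT' heC⟩

/-- Let `G` be a finite connected directed multigraph with boundary vertex
`bd`, and let `C` be a directed cycle in `G` not passing through `bd`.  If `T'` is a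
spanning arborescence of the contracted graph `Ψ_contr((G, bd), C)`, then the uncontraction
`T = Ψ_ucontr((G, bd), (G', bd), C, T')` — namely the union of the edges of `C` with the
edges of `T'`, minus the edge `eC` of `C` leaving the same vertex as the `T'`-edge `f`
outgoing from the contracted vertex — is a spanning arborescence of `(G, bd)`. -/
theorem stmt_6 {V E : Type} [Fintype V] [Fintype E] (G : DirMultigraph V E)
    (hloop : G.NoSelfLoops) (hconn : G.Connected) (bd : V)
    (C : Set E) (hC : G.IsCycleSet C) (hbd : bd ∉ G.verts C)
    (T' : Set (G.ContractedE (G.verts C)))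
    (hT' : (G.contract (G.verts C)).IsArborescence (some ⟨bd, hbd⟩) T')
    (f : G.ContractedE (G.verts C)) (hfT : f ∈ T') (hf : G.tail f.1 ∈ G.verts C)
    (eC : E) (heC : eC ∈ C) (heCf : G.tail eC = G.tail f.1) :
    G.IsArborescence bd ((C ∪ (Subtype.val '' T')) \ {eC}) :=
  stmt_6_general G bd C hC hbd T' hT' f hfT hf eC heC heCf
end

section
/- Fix K > 0 and let g be a probability density on [0,∞) with full support satisfying sup_{u>0, 0<x≤K} g(u−x)/g(u) ≤ C(K) < ∞ for every K ('good' density). Let Z = (Z_1, Z_2, ...) be i.i.d. with density g, let X = (X_1, X_2, ...) be independent of Z with law absolutely continuous with respect to the law of Z, let I = {I_1,...,I_d} ⊆ N be an almost surely finite (possibly empty) set of indices chosen measurably from X, and set X* = max{X_{I_1},...,X_{I_d}}. Define Y_k = 2X* + Z_j if k = I_j for some j, and Y_k = X_k otherwise. Then the law of Y = (Y_k)_{k∈N} is absolutely continuous with respect to the law of Z. -/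
/-!
Let `ν` be the law with density `g` and `μ = ν^ℕ` the law of `Z`. The law of `(X, Z)` is
dominated by `μ ⊗ μ` and `Y` is a measurable function of `(X, Z)`, so it suffices to push
`μ ⊗ μ` forward. Splitting along the countably many values `S` of the index set, `I = S` may be
taken fixed. Exchanging the `S`-coordinates of `x` and `z` preserves `μ ⊗ μ`; afterwards `Y` is
the first vector with its `S`-coordinates shifted by `2 max_S` of the second vector, an
independent nonnegative amount. Since `g (u - s) ≤ C g u`, a shift by `s ≥ 0` keeps `ν` absolutely
continuous, and changing finitely many factors of `μ` in this way keeps it absolutely continuous.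
-/

open MeasureTheory ProbabilityTheory

namespace MeasureTheory.Measure

section InfinitePi

variable {ι : Type*}

theorem measurePreserving_arrowProdEquivProdArrow_infinitePi {X Y : Type*}
    [MeasurableSpace X] [MeasurableSpace Y] (μ : ι → Measure X) (ν : ι → Measure Y)
    [∀ i, IsProbabilityMeasure (μ i)] [∀ i, IsProbabilityMeasure (ν i)] :
    MeasurePreserving (MeasurableEquiv.arrowProdEquivProdArrow X Y ι)
      (infinitePi fun i ↦ (μ i).prod (ν i)) ((infinitePi μ).prod (infinitePi ν)) := by
  refine ⟨MeasurableEquiv.measurable _, ?_⟩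
  rw [MeasurableEquiv.map_apply_eq_iff_map_symm_apply_eq]
  refine (isProjectiveLimit_infinitePi fun i ↦ (μ i).prod (ν i)).unique fun I ↦ ?_
  have hrestrict : I.restrict ∘ (MeasurableEquiv.arrowProdEquivProdArrow X Y ι).symm
      = (MeasurableEquiv.arrowProdEquivProdArrow X Y I).symm ∘ Prod.map I.restrict I.restrict :=
    rfl
  rw [map_map (by fun_prop) (MeasurableEquiv.measurable _), hrestrict,
    ← map_map (MeasurableEquiv.measurable _) (by fun_prop),
    ← map_prod_map _ _ (by fun_prop) (by fun_prop), infinitePi_map_restrict,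
    infinitePi_map_restrict]
  exact (measurePreserving_arrowProdEquivProdArrow X Y I _ _).symm.map_eq

theorem measurePreserving_piecewise_swap {X : Type*} [MeasurableSpace X] (μ : ι → Measure X)
    [∀ i, IsProbabilityMeasure (μ i)] (S : Finset ι) [∀ i, Decidable (i ∈ S)] :
    MeasurePreserving (fun p : (ι → X) × (ι → X) ↦ (S.piecewise p.2 p.1, S.piecewise p.1 p.2))
      ((infinitePi μ).prod (infinitePi μ)) ((infinitePi μ).prod (infinitePi μ)) := by
  have he := measurePreserving_arrowProdEquivProdArrow_infinitePi μ μ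
  have hswap : MeasurePreserving
      (fun (w : ι → X × X) i ↦ (if i ∈ S then Prod.swap else id) (w i))
      (infinitePi fun i ↦ (μ i).prod (μ i)) (infinitePi fun i ↦ (μ i).prod (μ i)) := by
    refine ⟨measurable_pi_lambda _ fun i ↦ ?_, ?_⟩
    · split_ifs <;> fun_prop
    rw [infinitePi_map_pi _ fun i ↦ by split_ifs <;> fun_prop]
    congr with i : 1
    split_ifs
    · exact prod_swap
    · exact map_id
  convert he.comp (hswap.comp he.symm) using 1
  ext p i <;> by_cases hi : i ∈ S <;> simp [hi, MeasurableEquiv.arrowProdEquivProdArrow]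

variable {X : ι → Type*} [∀ i, MeasurableSpace (X i)]

theorem infinitePi_eq_map_update [DecidableEq ι] {μ μ' : (i : ι) → Measure (X i)}
    [∀ i, IsProbabilityMeasure (μ i)] [∀ i, IsProbabilityMeasure (μ' i)] {k : ι}
    (h : ∀ i ≠ k, μ' i = μ i) :
    infinitePi μ' = ((μ' k).prod (infinitePi μ)).map fun p ↦ Function.update p.2 k p.1 := by
  symm
  refine eq_infinitePi _ fun s t ht ↦ ?_
  rw [map_apply (by fun_prop) (.pi s.countable_toSet fun i _ ↦ ht i)]
  by_cases hk : k ∈ s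
  · have : (fun p : X k × ((i : ι) → X i) ↦ Function.update p.2 k p.1) ⁻¹' (s : Set ι).pi t
        = t k ×ˢ ((s.erase k : Finset ι) : Set ι).pi t := by
      ext ⟨a, x⟩
      simp only [Set.mem_preimage, Set.mem_pi, Finset.mem_coe, Set.mem_prod, Finset.mem_erase]
      constructor
      · intro hx
        refine ⟨by simpa using hx k hk, fun i ⟨hik, hi⟩ ↦ ?_⟩
        simpa [Function.update_of_ne hik] using hx i hi
      · rintro ⟨ha, hx⟩ i hi
        rcases eq_or_ne i k with rfl | hik
        · simpa using ha
        · simpa [Function.update_of_ne hik] using hx i ⟨hik, hi⟩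
    rw [this, prod_prod, infinitePi_pi _ fun i _ ↦ ht i, ← Finset.mul_prod_erase s _ hk]
    congr 1
    exact Finset.prod_congr rfl fun i hi ↦ by rw [h i (Finset.ne_of_mem_erase hi)]
  · have : (fun p : X k × ((i : ι) → X i) ↦ Function.update p.2 k p.1) ⁻¹' (s : Set ι).pi t
        = Set.univ ×ˢ (s : Set ι).pi t := by
      ext ⟨a, x⟩
      simp only [Set.mem_preimage, Set.mem_pi, Finset.mem_coe, Set.mem_prod, Set.mem_univ,
        true_and]
      refine forall₂_congr fun i hi ↦ ?_
      rw [Function.update_of_ne (ne_of_mem_of_not_mem hi hk)]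
    rw [this, prod_prod, infinitePi_pi _ fun i _ ↦ ht i, measure_univ, one_mul]
    exact Finset.prod_congr rfl fun i hi ↦ by rw [h i (ne_of_mem_of_not_mem hi hk)]

theorem infinitePi_absolutelyContinuous_of_ne [DecidableEq ι] {μ μ' : (i : ι) → Measure (X i)}
    [∀ i, IsProbabilityMeasure (μ i)] [∀ i, IsProbabilityMeasure (μ' i)] {k : ι}
    (h : ∀ i ≠ k, μ' i = μ i) (hk : μ' k ≪ μ k) :
    infinitePi μ' ≪ infinitePi μ :=
  calc infinitePi μ'
      = ((μ' k).prod (infinitePi μ)).map fun p ↦ Function.update p.2 k p.1 :=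
        infinitePi_eq_map_update h
    _ ≪ ((μ k).prod (infinitePi μ)).map fun p ↦ Function.update p.2 k p.1 :=
        (hk.prod .rfl).map (by fun_prop)
    _ = infinitePi μ := (infinitePi_eq_map_update (μ' := μ) fun _ _ ↦ rfl).symm

theorem infinitePi_absolutelyContinuous {μ μ' : (i : ι) → Measure (X i)}
    [∀ i, IsProbabilityMeasure (μ i)] [∀ i, IsProbabilityMeasure (μ' i)] (S : Finset ι)
    (hS : ∀ i ∈ S, μ' i ≪ μ i) (hSc : ∀ i ∉ S, μ' i = μ i) :
    infinitePi μ' ≪ infinitePi μ := by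
  classical
  induction S using Finset.induction_on generalizing μ' with
  | empty => rw [funext fun i ↦ hSc i (Finset.notMem_empty i)]
  | @insert k S hk ih =>
    set μ'' := Function.update μ' k (μ k) with hμ''
    have : ∀ i, IsProbabilityMeasure (μ'' i) := fun i ↦ by
      rcases eq_or_ne i k with rfl | hik
      · rw [hμ'', Function.update_self]; infer_instance
      · rw [hμ'', Function.update_of_ne hik]; infer_instance
    refine (infinitePi_absolutelyContinuous_of_ne (μ := μ'') (k := k) (fun i hik ↦ ?_) ?_).trans
      (ih (fun i hi ↦ ?_) fun i hi ↦ ?_)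
    · rw [hμ'', Function.update_of_ne hik]
    · rw [hμ'', Function.update_self]
      exact hS k (Finset.mem_insert_self k S)
    · rw [hμ'', Function.update_of_ne (ne_of_mem_of_not_mem hi hk)]
      exact hS i (Finset.mem_insert_of_mem hi)
    · rcases eq_or_ne i k with rfl | hik
      · rw [hμ'', Function.update_self]
      · rw [hμ'', Function.update_of_ne hik]
        exact hSc i (by simp [hik, hi])

end InfinitePi

theorem map_prod_absolutelyContinuous_of_ae {α β γ : Type*} [MeasurableSpace α]
    [MeasurableSpace β] [MeasurableSpace γ] {μ : Measure α} {ν : Measure β} [SFinite μ]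
    [SFinite ν] {ξ : Measure γ} {f : α × β → γ} (hf : Measurable f)
    (h : ∀ᵐ b ∂ν, μ.map (fun a ↦ f (a, b)) ≪ ξ) :
    (μ.prod ν).map f ≪ ξ := by
  refine AbsolutelyContinuous.mk fun A hA hξA ↦ ?_
  rw [map_apply hf hA, prod_apply_symm (hf hA)]
  refine (lintegral_congr_ae (h.mono fun b hb ↦ ?_)).trans lintegral_zero
  have := hb hξA
  rwa [map_apply (by fun_prop) hA] at this

theorem map_absolutelyContinuous_of_countable_pieces {α β γ : Type*} [MeasurableSpace α]
    [MeasurableSpace γ] [Countable β] {μ : Measure α} {ξ : Measure γ} {f : β → α → γ}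
    (hf : ∀ b, Measurable (f b)) {ψ : α → β} (hF : Measurable fun a ↦ f (ψ a) a)
    (h : ∀ b, μ.map (f b) ≪ ξ) :
    μ.map (fun a ↦ f (ψ a) a) ≪ ξ := by
  refine AbsolutelyContinuous.mk fun A hA hξA ↦ ?_
  rw [map_apply hF hA]
  refine measure_mono_null (t := ⋃ b, f b ⁻¹' A) (fun a ha ↦ Set.mem_iUnion.2 ⟨ψ a, ha⟩)
    (measure_iUnion_null fun b ↦ ?_)
  rw [← map_apply (hf b) hA]
  exact h b hξA

end MeasureTheory.Measure

open Measure

theorem map_const_add_withDensity_absolutelyContinuous {g : ℝ → ℝ} (hg0 : ∀ x, 0 ≤ g x)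
    (hgneg : ∀ x < (0 : ℝ), g x = 0)
    (hgood : ∀ K > (0 : ℝ), ∃ C : ℝ,
      ∀ u ∈ Set.Ioi (0 : ℝ), ∀ x ∈ Set.Ioc (0 : ℝ) K, g (u - x) ≤ C * g u)
    {s : ℝ} (hs : 0 ≤ s) :
    (volume.withDensity fun x ↦ ENNReal.ofReal (g x)).map (s + ·)
      ≪ volume.withDensity fun x ↦ ENNReal.ofReal (g x) := by
  rcases hs.eq_or_lt with rfl | hs
  · simpa using AbsolutelyContinuous.rfl
  obtain ⟨C, hC⟩ := hgood s hs
  have hdom : ∀ x, ENNReal.ofReal (g x) ≤ ENNReal.ofReal C * ENNReal.ofReal (g (s + x)) := by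
    intro x
    rcases lt_or_ge x 0 with hx | hx
    · simp [hgneg x hx]
    have := hC (s + x) (by simp only [Set.mem_Ioi]; linarith) s ⟨hs, le_rfl⟩
    rw [add_sub_cancel_left] at this
    rw [← ENNReal.ofReal_mul' (hg0 _)]
    exact ENNReal.ofReal_le_ofReal this
  refine absolutelyContinuous_of_le_smul (c := ENNReal.ofReal C) (le_iff.2 fun A hA ↦ ?_)
  have hshift := measurePreserving_add_left volume s
  rw [map_apply hshift.measurable hA, Measure.smul_apply, smul_eq_mul, withDensity_apply _ hA,
    withDensity_apply _ (hshift.measurable hA),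
    ← hshift.setLIntegral_comp_preimage_emb (MeasurableEquiv.addLeft s).measurableEmbedding
      (fun y ↦ ENNReal.ofReal (g y)) A,
    ← lintegral_const_mul' _ _ ENNReal.ofReal_ne_top]
  exact lintegral_mono fun x ↦ hdom x

section Replacement

variable {ι : Type*}

noncomputable def finsetMax (S : Finset ι) (x : ι → ℝ) : ℝ :=
  if h : S.Nonempty then S.sup' h x else 0

theorem measurable_finsetMax (S : Finset ι) : Measurable (finsetMax S) := by
  unfold finsetMax
  split_ifs with h
  · convert Finset.measurable_sup' h (f := fun i (x : ι → ℝ) ↦ x i)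
      fun i _ ↦ measurable_pi_apply i using 1
    ext x
    simp [Finset.sup'_apply]
  · exact measurable_const

theorem finsetMax_nonneg {S : Finset ι} {x : ι → ℝ} (hx : ∀ i ∈ S, 0 ≤ x i) :
    0 ≤ finsetMax S x := by
  unfold finsetMax
  split_ifs with h
  · obtain ⟨i, hi⟩ := h
    exact (hx i hi).trans (S.le_sup' x hi)
  · rfl

variable [DecidableEq ι]

def shiftOn (S : Finset ι) (s : ℝ) (x : ι → ℝ) : ι → ℝ :=
  fun i ↦ if i ∈ S then s + x i else x i

theorem measurable_shiftOn_uncurry (S : Finset ι) :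
    Measurable fun q : ℝ × (ι → ℝ) ↦ shiftOn S q.1 q.2 :=
  measurable_pi_lambda _ fun i ↦ by unfold shiftOn; split_ifs <;> fun_prop

theorem map_shiftOn_infinitePi_absolutelyContinuous {ν : Measure ℝ} [IsProbabilityMeasure ν]
    (S : Finset ι) {s : ℝ} (h : ν.map (s + ·) ≪ ν) :
    (infinitePi fun _ : ι ↦ ν).map (shiftOn S s) ≪ infinitePi fun _ ↦ ν := by
  have hf : ∀ i, Measurable (if i ∈ S then (s + ·) else id) := fun i ↦ by
    split_ifs <;> fun_prop
  have : ∀ i, IsProbabilityMeasure (ν.map (if i ∈ S then (s + ·) else id)) := fun i ↦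
    isProbabilityMeasure_map (hf i).aemeasurable
  have hshift : shiftOn S s = fun x i ↦ (if i ∈ S then (s + ·) else id) (x i) := by
    ext x i; unfold shiftOn; split_ifs <;> rfl
  rw [hshift, infinitePi_map_pi _ hf]
  refine infinitePi_absolutelyContinuous S (fun i hi ↦ ?_) fun i hi ↦ ?_
  · simpa [hi] using h
  · simp [hi]

theorem finsetMax_piecewise (S : Finset ι) (x y : ι → ℝ) :
    finsetMax S (S.piecewise x y) = finsetMax S x := by
  unfold finsetMax
  split_ifs with h
  · exact Finset.sup'_congr h rfl fun i hi ↦ S.piecewise_eq_of_mem x y hi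
  · rfl

noncomputable def replaceOn (S : Finset ι) (p : (ι → ℝ) × (ι → ℝ)) : ι → ℝ :=
  shiftOn S (2 * finsetMax S p.1) (S.piecewise p.2 p.1)

theorem measurable_replaceOn (S : Finset ι) : Measurable (replaceOn S) :=
  (measurable_shiftOn_uncurry S).comp
    ((((measurable_finsetMax S).comp measurable_fst).const_mul 2).prodMk
      (measurable_pi_lambda _ fun i ↦ by
        show Measurable fun p : (ι → ℝ) × (ι → ℝ) ↦ S.piecewise p.2 p.1 i
        by_cases hi : i ∈ S
        · simp only [Finset.piecewise_eq_of_mem _ _ _ hi]; fun_prop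
        · simp only [Finset.piecewise_eq_of_notMem _ _ _ hi]; fun_prop))

theorem measurable_replaceOn_comp [Countable ι] {φ : (ι → ℝ) → Finset ι} (hφ : Measurable φ) :
    Measurable fun p : (ι → ℝ) × (ι → ℝ) ↦ replaceOn (φ p.1) p :=
  (measurable_from_prod_countable_left (f := fun q : _ × Finset ι ↦ replaceOn q.2 q.1)
    measurable_replaceOn).comp (measurable_id.prodMk (hφ.comp measurable_fst))

variable {ν : Measure ℝ} [IsProbabilityMeasure ν]

theorem map_replaceOn_absolutelyContinuous (hν : ∀ᵐ y ∂ν, 0 ≤ y)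
    (hshift : ∀ s, 0 ≤ s → ν.map (s + ·) ≪ ν) (S : Finset ι) :
    ((infinitePi fun _ : ι ↦ ν).prod (infinitePi fun _ ↦ ν)).map (replaceOn S)
      ≪ infinitePi fun _ ↦ ν := by
  have hσ := measurePreserving_piecewise_swap (fun _ : ι ↦ ν) S
  have hrepl : replaceOn S = (fun q ↦ shiftOn S (2 * finsetMax S q.2) q.1) ∘
      fun p : (ι → ℝ) × (ι → ℝ) ↦ (S.piecewise p.2 p.1, S.piecewise p.1 p.2) := by
    ext p : 1
    simp only [replaceOn, Function.comp_apply, finsetMax_piecewise]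
  have hpos : ∀ᵐ x ∂(infinitePi fun _ : ι ↦ ν), ∀ i ∈ S, 0 ≤ x i :=
    (Filter.eventually_all_finset S).2 fun i _ ↦
      ae_of_ae_map (measurable_pi_apply i).aemeasurable (by rwa [infinitePi_map_eval])
  have hH : Measurable fun q : (ι → ℝ) × (ι → ℝ) ↦ shiftOn S (2 * finsetMax S q.2) q.1 :=
    (measurable_shiftOn_uncurry S).comp
      ((((measurable_finsetMax S).comp measurable_snd).const_mul 2).prodMk measurable_fst)
  rw [hrepl, ← map_map hH hσ.measurable, hσ.map_eq]
  refine map_prod_absolutelyContinuous_of_ae hH (hpos.mono fun x hx ↦ ?_)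
  exact map_shiftOn_infinitePi_absolutelyContinuous S
    (hshift _ (mul_nonneg zero_le_two (finsetMax_nonneg hx)))

theorem map_replaceOn_comp_absolutelyContinuous [Countable ι] (hν : ∀ᵐ y ∂ν, 0 ≤ y)
    (hshift : ∀ s, 0 ≤ s → ν.map (s + ·) ≪ ν) {φ : (ι → ℝ) → Finset ι} (hφ : Measurable φ) :
    ((infinitePi fun _ : ι ↦ ν).prod (infinitePi fun _ ↦ ν)).map
      (fun p ↦ replaceOn (φ p.1) p) ≪ infinitePi fun _ ↦ ν :=
  map_absolutelyContinuous_of_countable_pieces measurable_replaceOn (measurable_replaceOn_comp hφ)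
    fun S ↦ map_replaceOn_absolutelyContinuous hν hshift S

end Replacement

theorem stmt_12_general {Ω : Type*} [MeasurableSpace Ω] (P : Measure Ω) [IsProbabilityMeasure P]
    (g : ℝ → ℝ)
    (hg0 : ∀ x, 0 ≤ g x) (hgneg : ∀ x < (0 : ℝ), g x = 0)
    (hgood : ∀ K > (0 : ℝ), ∃ C : ℝ,
      ∀ u ∈ Set.Ioi (0 : ℝ), ∀ x ∈ Set.Ioc (0 : ℝ) K, g (u - x) ≤ C * g u)
    (Z X : ℕ → Ω → ℝ)
    (hZmeas : ∀ n, Measurable (Z n)) (hXmeas : ∀ n, Measurable (X n))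
    (hZlaw : ∀ n, Measure.map (Z n) P
      = volume.withDensity (fun x => ENNReal.ofReal (g x)))
    (hZindep : iIndepFun Z P)
    (hXZindep : IndepFun (fun ω => fun n => X n ω) (fun ω => fun n => Z n ω) P)
    (hXac : Measure.map (fun ω => fun n => X n ω) P
      ≪ Measure.map (fun ω => fun n => Z n ω) P)
    (φ : (ℕ → ℝ) → Finset ℕ)
    (hφ : ∀ n : ℕ, MeasurableSet {x : ℕ → ℝ | n ∈ φ x})
    (I : Ω → Finset ℕ) (hI : ∀ ω, I ω = φ (fun n => X n ω))
    (Xstar : Ω → ℝ)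
    (hXstar : ∀ ω, Xstar ω
      = if h : (I ω).Nonempty then (I ω).sup' h (fun n => X n ω) else 0)
    (Y : ℕ → Ω → ℝ)
    (hY : ∀ k ω, Y k ω = if k ∈ I ω then 2 * Xstar ω + Z k ω else X k ω) :
    Measure.map (fun ω => fun n => Y n ω) P
      ≪ Measure.map (fun ω => fun n => Z n ω) P := by
  set ν := volume.withDensity fun x ↦ ENNReal.ofReal (g x)
  have hXm : Measurable fun ω n ↦ X n ω := measurable_pi_lambda _ hXmeas
  have hZm : Measurable fun ω n ↦ Z n ω := measurable_pi_lambda _ hZmeas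
  have : IsProbabilityMeasure ν := hZlaw 0 ▸ isProbabilityMeasure_map (hZmeas 0).aemeasurable
  have hZlaw' : P.map (fun ω n ↦ Z n ω) = infinitePi fun _ ↦ ν := by
    rw [hZindep.map_fun_eq_infinitePi_map hZmeas]
    simp_rw [hZlaw]
  have hν : ∀ᵐ y ∂ν, 0 ≤ y := by
    refine ae_iff.2 ?_
    simp only [not_le]
    rw [show {y : ℝ | y < 0} = Set.Iio 0 from rfl, withDensity_apply _ measurableSet_Iio]
    exact setLIntegral_eq_zero measurableSet_Iio fun y hy ↦ by simp [hgneg y hy]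
  have hφm : Measurable φ := measurable_finset_iff.2 fun n ↦ measurableSet_setOfPred.1 (hφ n)
  have hF := measurable_replaceOn_comp hφm
  have hY' : (fun ω n ↦ Y n ω)
      = (fun p ↦ replaceOn (φ p.1) p) ∘ fun ω ↦ (fun n ↦ X n ω, fun n ↦ Z n ω) := by
    ext ω k
    rw [hY, hXstar, hI]
    by_cases hk : k ∈ φ fun n ↦ X n ω <;> simp [replaceOn, shiftOn, finsetMax, hk]
  rw [hY', ← map_map hF (hXm.prodMk hZm),
    (indepFun_iff_map_prod_eq_prod_map_map hXm.aemeasurable hZm.aemeasurable).1 hXZindep]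
  rw [hZlaw'] at hXac ⊢
  exact ((hXac.prod AbsolutelyContinuous.rfl).map hF).trans
    (map_replaceOn_comp_absolutelyContinuous hν
      (fun _ hs ↦ map_const_add_withDensity_absolutelyContinuous hg0 hgneg hgood hs) hφm)

/-- Let `g` be a 'good' probability density on `[0,∞)` (full support there,
vanishing on negatives, and for every `K > 0` there is `C(K)` with
`g(u−x) ≤ C(K)·g(u)` for all `u > 0`, `0 < x ≤ K`).  Let `Z = (Z_n)` be i.i.d. with density
`g`, let `X = (X_n)` be independent of `Z` with law absolutely continuous with respect to
the law of `Z`, let `I ⊆ ℕ` be an (automatically a.s. finite) finite set of indices chosen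
measurably from `X`, and set `X* = max_{k ∈ I} X_k`.  Define `Y_k = 2X* + Z_k` if `k ∈ I`
and `Y_k = X_k` otherwise.  Then the law of `Y = (Y_k)` is absolutely continuous with
respect to the law of `Z`. -/
theorem stmt_12 {Ω : Type*} [MeasurableSpace Ω] (P : Measure Ω) [IsProbabilityMeasure P]
    (g : ℝ → ℝ)
    (hg0 : ∀ x, 0 ≤ g x) (hgneg : ∀ x < (0 : ℝ), g x = 0)
    (hgpos : ∀ x, 0 ≤ x → 0 < g x)
    (hgint : ∫ x, g x = 1)
    (hgood : ∀ K > (0 : ℝ), ∃ C : ℝ,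
      ∀ u ∈ Set.Ioi (0 : ℝ), ∀ x ∈ Set.Ioc (0 : ℝ) K, g (u - x) ≤ C * g u)
    (Z X : ℕ → Ω → ℝ)
    (hZmeas : ∀ n, Measurable (Z n)) (hXmeas : ∀ n, Measurable (X n))
    (hZlaw : ∀ n, Measure.map (Z n) P
      = volume.withDensity (fun x => ENNReal.ofReal (g x)))
    (hZindep : iIndepFun Z P)
    (hXZindep : IndepFun (fun ω => fun n => X n ω) (fun ω => fun n => Z n ω) P)
    (hXac : Measure.map (fun ω => fun n => X n ω) P
      ≪ Measure.map (fun ω => fun n => Z n ω) P)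
    (φ : (ℕ → ℝ) → Finset ℕ)
    (hφ : ∀ n : ℕ, MeasurableSet {x : ℕ → ℝ | n ∈ φ x})
    (I : Ω → Finset ℕ) (hI : ∀ ω, I ω = φ (fun n => X n ω))
    (Xstar : Ω → ℝ)
    (hXstar : ∀ ω, Xstar ω
      = if h : (I ω).Nonempty then (I ω).sup' h (fun n => X n ω) else 0)
    (Y : ℕ → Ω → ℝ)
    (hY : ∀ k ω, Y k ω = if k ∈ I ω then 2 * Xstar ω + Z k ω else X k ω) :
    Measure.map (fun ω => fun n => Y n ω) P
      ≪ Measure.map (fun ω => fun n => Z n ω) P :=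
  stmt_12_general P g hg0 hgneg hgood Z X hZmeas hXmeas hZlaw hZindep hXZindep hXac φ hφ I hI Xstar
    hXstar Y hY
end
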